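/- For every (x,y) ∈ Δ_m×Δ_n, the minimax equality V(x,y) = max over (ρ,w,z) (with ρ ∈ [0,1], w ∈ Δ_m, supp(w) ⊆ S_R(y), z ∈ Δ_n, supp(z) ⊆ S_C(x)) of the min over (x′,y′) ∈ Δ_m×Δ_n of T(x,y,x′,y′,ρ,w,z) holds, and moreover there exists such a tuple (ρ₀,w₀,z₀) with V(x,y) = min over (x′,y′) ∈ Δ_m×Δ_n of T(x,y,x′,y′,ρ₀,w₀,z₀). -/
import Mathlib


open scoped BigOperators Classical
open Matrix Filter

noncomputable section

namespace TS

/-- The probability simplex in `ℝ^k`. -/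
def Δ (k : ℕ) : Set (Fin k → ℝ) := {x | (∀ i, 0 ≤ x i) ∧ ∑ i, x i = 1}

/-- Maximum entry of a vector. -/
def vmax {k : ℕ} (u : Fin k → ℝ) : ℝ := ⨆ i, u i

/-- Maximum entry of a vector over an index set. -/
def vmaxOn {k : ℕ} (S : Set (Fin k)) (u : Fin k → ℝ) : ℝ := ⨆ i ∈ S, u i

/-- The support of a vector: indices with positive entries. -/
def supp {k : ℕ} (u : Fin k → ℝ) : Set (Fin k) := {i | 0 < u i}

/-- The set of indices where `u` attains its maximum entry. -/
def suppmax {k : ℕ} (u : Fin k → ℝ) : Set (Fin k) := {i | ∀ j, u j ≤ u i}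

/-- The set of indices where `u` attains its minimum entry. -/
def suppmin {k : ℕ} (u : Fin k → ℝ) : Set (Fin k) := {i | ∀ j, u i ≤ u j}

variable {m n : ℕ}

/-- `f_R(x,y) = max(Ry) − xᵀRy`. -/
def fR (R : Matrix (Fin m) (Fin n) ℝ) (x : Fin m → ℝ) (y : Fin n → ℝ) : ℝ :=
  vmax (R.mulVec y) - x ⬝ᵥ R.mulVec y

/-- `f_C(x,y) = max(Cᵀx) − xᵀCy`. -/
def fC (C : Matrix (Fin m) (Fin n) ℝ) (x : Fin m → ℝ) (y : Fin n → ℝ) : ℝ :=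
  vmax (Matrix.vecMul x C) - x ⬝ᵥ C.mulVec y

/-- `f(x,y) = max{f_R(x,y), f_C(x,y)}`. -/
def fNE (R C : Matrix (Fin m) (Fin n) ℝ) (x : Fin m → ℝ) (y : Fin n → ℝ) : ℝ :=
  max (fR R x y) (fC C x y)

/-- `S_R(y) = suppmax(Ry)`. -/
def SR (R : Matrix (Fin m) (Fin n) ℝ) (y : Fin n → ℝ) : Set (Fin m) := suppmax (R.mulVec y)

/-- `S_C(x) = suppmax(Cᵀx)`. -/
def SC (C : Matrix (Fin m) (Fin n) ℝ) (x : Fin m → ℝ) : Set (Fin n) := suppmax (Matrix.vecMul x C)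

/-- `g` has right (one-sided) derivative `d` at `0`: `lim_{θ→0⁺} (g θ − g 0)/θ = d`. -/
def HasPosDeriv (g : ℝ → ℝ) (d : ℝ) : Prop :=
  Tendsto (fun θ : ℝ => (g θ - g 0) / θ) (nhdsWithin 0 (Set.Ioi 0)) (nhds d)

/-- `(x,y)` is a stationary point: for every `(x',y')` in the product simplex, the scaled
directional derivative `Df(x,y,x',y')` of `f` exists and is nonnegative. -/
def IsStationary (R C : Matrix (Fin m) (Fin n) ℝ) (x : Fin m → ℝ) (y : Fin n → ℝ) : Prop :=
  ∀ x' ∈ Δ m, ∀ y' ∈ Δ n, ∃ d : ℝ,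
    HasPosDeriv (fun θ : ℝ => fNE R C (x + θ • (x' - x)) (y + θ • (y' - y))) d ∧ 0 ≤ d

/-- The function `T(x,y,x',y',ρ,w,z)`. -/
def Tfun (R C : Matrix (Fin m) (Fin n) ℝ) (x : Fin m → ℝ) (y : Fin n → ℝ)
    (x' : Fin m → ℝ) (y' : Fin n → ℝ) (ρ : ℝ) (w : Fin m → ℝ) (z : Fin n → ℝ) : ℝ :=
  ρ * (w ⬝ᵥ R.mulVec y' - x ⬝ᵥ R.mulVec y' - x' ⬝ᵥ R.mulVec y + x ⬝ᵥ R.mulVec y)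
    + (1 - ρ) * (x' ⬝ᵥ C.mulVec z - x ⬝ᵥ C.mulVec y' - x' ⬝ᵥ C.mulVec y + x ⬝ᵥ C.mulVec y)

/-- Feasibility for the tuple `(ρ,w,z)`: `ρ ∈ [0,1]`, `w ∈ Δ_m` with `supp w ⊆ S_R(y)`,
`z ∈ Δ_n` with `supp z ⊆ S_C(x)`. -/
def dualFeasible (R C : Matrix (Fin m) (Fin n) ℝ) (x : Fin m → ℝ) (y : Fin n → ℝ)
    (ρ : ℝ) (w : Fin m → ℝ) (z : Fin n → ℝ) : Prop :=
  ρ ∈ Set.Icc (0:ℝ) 1 ∧ w ∈ Δ m ∧ supp w ⊆ SR R y ∧ z ∈ Δ n ∧ supp z ⊆ SC C x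

/-- `max_{ρ,w,z} T(x,y,x',y',ρ,w,z)` over feasible `(ρ,w,z)`. -/
def innerMax (R C : Matrix (Fin m) (Fin n) ℝ) (x : Fin m → ℝ) (y : Fin n → ℝ)
    (x' : Fin m → ℝ) (y' : Fin n → ℝ) : ℝ :=
  sSup {t : ℝ | ∃ ρ w z, dualFeasible R C x y ρ w z ∧ t = Tfun R C x y x' y' ρ w z}

/-- `V(x,y) = min_{(x',y') ∈ Δ_m×Δ_n} max_{ρ,w,z} T(x,y,x',y',ρ,w,z)`. -/
def Vval (R C : Matrix (Fin m) (Fin n) ℝ) (x : Fin m → ℝ) (y : Fin n → ℝ) : ℝ :=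
  sInf {t : ℝ | ∃ x' ∈ Δ m, ∃ y' ∈ Δ n, t = innerMax R C x y x' y'}

/-- `min_{(x',y') ∈ Δ_m×Δ_n} T(x,y,x',y',ρ,w,z)`. -/
def innerMin (R C : Matrix (Fin m) (Fin n) ℝ) (x : Fin m → ℝ) (y : Fin n → ℝ)
    (ρ : ℝ) (w : Fin m → ℝ) (z : Fin n → ℝ) : ℝ :=
  sInf {t : ℝ | ∃ x' ∈ Δ m, ∃ y' ∈ Δ n, t = Tfun R C x y x' y' ρ w z}

/-- `(ρ,w,z)` is a dual solution at `(x,y)`. -/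
def IsDualSolution (R C : Matrix (Fin m) (Fin n) ℝ) (x : Fin m → ℝ) (y : Fin n → ℝ)
    (ρ : ℝ) (w : Fin m → ℝ) (z : Fin n → ℝ) : Prop :=
  dualFeasible R C x y ρ w z ∧ Vval R C x y = innerMin R C x y ρ w z

/-- `(x,y)` is an `ε`-approximate Nash equilibrium. -/
def IsEpsNash (R C : Matrix (Fin m) (Fin n) ℝ) (x : Fin m → ℝ) (y : Fin n → ℝ) (ε : ℝ) : Prop :=
  (∀ x' ∈ Δ m, x' ⬝ᵥ R.mulVec y ≤ x ⬝ᵥ R.mulVec y + ε) ∧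
  (∀ y' ∈ Δ n, x ⬝ᵥ C.mulVec y' ≤ x ⬝ᵥ C.mulVec y + ε)

/-- A Nash equilibrium is a `0`-approximate Nash equilibrium. -/
def IsNash (R C : Matrix (Fin m) (Fin n) ℝ) (x : Fin m → ℝ) (y : Fin n → ℝ) : Prop :=
  IsEpsNash R C x y 0

/-- `λ* = (w*−x*)ᵀRz*`. -/
def lamStar (R : Matrix (Fin m) (Fin n) ℝ) (xs ws : Fin m → ℝ) (zs : Fin n → ℝ) : ℝ :=
  (ws - xs) ⬝ᵥ R.mulVec zs

/-- `μ* = w*ᵀC(z*−y*)`. -/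
def muStar (C : Matrix (Fin m) (Fin n) ℝ) (ws : Fin m → ℝ) (ys zs : Fin n → ℝ) : ℝ :=
  ws ⬝ᵥ C.mulVec (zs - ys)

/-- `p* = f_R(x*,z*)/(f_R(x*,z*)+f_C(w*,z*)−f_R(w*,z*))` (`= 0` if the denominator is `0`,
by the real-division-by-zero convention). -/
def pstar (R C : Matrix (Fin m) (Fin n) ℝ) (xs ws : Fin m → ℝ) (zs : Fin n → ℝ) : ℝ :=
  fR R xs zs / (fR R xs zs + fC C ws zs - fR R ws zs)

/-- `q* = f_C(w*,y*)/(f_C(w*,y*)+f_R(w*,z*)−f_C(w*,z*))` (`= 0` if the denominator is `0`). -/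
def qstar (R C : Matrix (Fin m) (Fin n) ℝ) (ws : Fin m → ℝ) (ys zs : Fin n → ℝ) : ℝ :=
  fC C ws ys / (fC C ws ys + fR R ws zs - fC C ws zs)

/-- The adjusted pair `(ũ,ṽ)` of Method 3. -/
def tildeUV (R C : Matrix (Fin m) (Fin n) ℝ) (xs : Fin m → ℝ) (ys : Fin n → ℝ)
    (ws : Fin m → ℝ) (zs : Fin n → ℝ) : (Fin m → ℝ) × (Fin n → ℝ) :=
  if fR R ws zs ≤ fC C ws zs then
    (pstar R C xs ws zs • ws + (1 - pstar R C xs ws zs) • xs, zs)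
  else
    (ws, qstar R C ws ys zs • zs + (1 - qstar R C ws ys zs) • ys)


section Auxiliary

lemma sep_lemma {ι α : Type*} [Fintype ι] [Nonempty ι] [AddCommGroup α] [Module ℝ α]
    {P : Set α} (hne : P.Nonempty) (hconv : Convex ℝ P)
    (F : ι → α → ℝ)
    (haff : ∀ k, ∀ p ∈ P, ∀ q ∈ P, ∀ a b : ℝ, 0 ≤ a → 0 ≤ b → a + b = 1 →
      F k (a • p + b • q) = a * F k p + b * F k q)
    (V : ℝ) (hV : ∀ p ∈ P, ∃ k, V ≤ F k p) :
    ∃ μ : ι → ℝ, (∀ k, 0 ≤ μ k) ∧ ∑ k, μ k = 1 ∧ ∀ p ∈ P, V ≤ ∑ k, μ k * F k p := by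
  classical
  set O : Set (ι → ℝ) := {u | ∀ k, u k < V} with hO
  set S : Set (ι → ℝ) := {u | ∃ p ∈ P, ∀ k, F k p ≤ u k} with hS
  have hOopen : IsOpen O := by
    have : O = Set.pi Set.univ (fun _ : ι => Set.Iio V) := by
      ext u; simp [hO, Set.mem_pi]
    rw [this]
    exact isOpen_set_pi Set.finite_univ (fun _ _ => isOpen_Iio)
  have hOconv : Convex ℝ O := by
    have : O = Set.pi Set.univ (fun _ : ι => Set.Iio V) := by
      ext u; simp [hO, Set.mem_pi]
    rw [this]
    exact convex_pi (fun _ _ => convex_Iio V)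
  have hSconv : Convex ℝ S := by
    rintro u ⟨p, hp, hu⟩ v ⟨q, hq, hv⟩ a b ha hb hab
    refine ⟨a • p + b • q, hconv hp hq ha hb hab, fun k => ?_⟩
    rw [haff k p hp q hq a b ha hb hab]
    have := add_le_add (mul_le_mul_of_nonneg_left (hu k) ha)
      (mul_le_mul_of_nonneg_left (hv k) hb)
    simpa using this
  have hdisj : Disjoint O S := by
    rw [Set.disjoint_left]
    rintro u hu ⟨p, hp, hle⟩
    obtain ⟨k, hk⟩ := hV p hp
    exact absurd (lt_of_le_of_lt (hk.trans (hle k)) (hu k)) (lt_irrefl _)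
  obtain ⟨f, s, hfO, hfS⟩ := geometric_hahn_banach_open hOconv hOopen hSconv hdisj
  set lam : ι → ℝ := fun k => f (Pi.single k 1) with hlam
  have hrepr : ∀ u : ι → ℝ, f u = ∑ k, u k * lam k := by
    intro u
    have hu : u = ∑ k, u k • (Pi.single k 1 : ι → ℝ) := by
      conv_lhs => rw [← Finset.univ_sum_single u]
      refine Finset.sum_congr rfl (fun k _ => ?_)
      rw [← Pi.single_smul, smul_eq_mul, mul_one]
    have h1 : f u = f (∑ k, u k • (Pi.single k 1 : ι → ℝ)) := by rw [← hu]
    rw [h1, map_sum]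
    refine Finset.sum_congr rfl (fun k _ => ?_)
    rw [f.map_smul, smul_eq_mul, hlam]
  obtain ⟨p₀, hp₀⟩ := hne
  have hSne : ((fun k => F k p₀) : ι → ℝ) ∈ S := ⟨p₀, hp₀, fun k => le_rfl⟩
  have hOmem : ∀ t : ℝ, t < V → (fun _ : ι => t) ∈ O := fun t ht k => ht
  have hlam_nonneg : ∀ k, 0 ≤ lam k := by
    intro k
    by_contra hneg
    push_neg at hneg
    -- consider u_t = const (V-1) - t • single k 1 ∈ O for t ≥ 0
    have hmem : ∀ t : ℝ, 0 ≤ t → (((fun _ => V - 1) : ι → ℝ) - t • (Pi.single k 1 : ι → ℝ)) ∈ O := by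
      intro t ht k'
      simp only [Pi.sub_apply, Pi.smul_apply, smul_eq_mul]
      rcases eq_or_ne k' k with rfl | hk'
      · simp only [Pi.single_eq_same, mul_one]; linarith
      · simp only [Pi.single_eq_of_ne hk', mul_zero, sub_zero]; linarith
    have hval : ∀ t : ℝ, f (((fun _ => V - 1) : ι → ℝ) - t • (Pi.single k 1 : ι → ℝ))
        = f (fun _ => V - 1) - t * lam k := by
      intro t
      rw [map_sub, f.map_smul, smul_eq_mul, hlam]
    set t₀ : ℝ := max 0 ((s - f (fun _ => V - 1)) / (-lam k) + 1) with ht₀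
    have ht₀0 : 0 ≤ t₀ := le_max_left _ _
    have h1 := hfO _ (hmem t₀ ht₀0)
    rw [hval] at h1
    have h2 : (s - f (fun _ => V - 1)) / (-lam k) + 1 ≤ t₀ := le_max_right _ _
    have hpos : 0 < -lam k := by linarith
    have : (s - f (fun _ => V - 1)) / (-lam k) < t₀ := by linarith
    rw [div_lt_iff₀ hpos] at this
    nlinarith
  have hsum_pos : 0 < ∑ k, lam k := by
    rcases lt_or_eq_of_le (Finset.sum_nonneg (fun k _ => hlam_nonneg k)) with h | h
    · exact h
    have hz : ∀ k, lam k = 0 := by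
      intro k
      have := (Finset.sum_eq_zero_iff_of_nonneg (fun k _ => hlam_nonneg k)).mp h.symm
      exact this k (Finset.mem_univ k)
    have hfz : ∀ u : ι → ℝ, f u = 0 := by
      intro u; rw [hrepr]; simp [hz]
    have h1 := hfO _ (hOmem (V - 1) (by linarith))
    have h2 := hfS _ hSne
    rw [hfz] at h1 h2
    linarith
  refine ⟨fun k => lam k / ∑ k', lam k', fun k => div_nonneg (hlam_nonneg k) hsum_pos.le,
    by rw [← Finset.sum_div]; field_simp, ?_⟩
  intro p hp
  have hb : s ≤ ∑ k, F k p * lam k := by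
    have := hfS _ ⟨p, hp, fun k => le_rfl⟩
    rwa [hrepr] at this
  have ha : ∀ ε : ℝ, 0 < ε → (V - ε) * ∑ k, lam k < s := by
    intro ε hε
    have := hfO _ (hOmem (V - ε) (by linarith))
    rw [hrepr] at this
    calc (V - ε) * ∑ k, lam k = ∑ k, (V - ε) * lam k := by rw [Finset.mul_sum]
    _ < s := this
  have key : ∀ ε : ℝ, 0 < ε → V ≤ (∑ k, (lam k / ∑ k', lam k') * F k p) + ε := by
    intro ε hε
    have h := (ha ε hε).le.trans hb
    have heq : ∑ k, (lam k / ∑ k', lam k') * F k p = (∑ k, F k p * lam k) / ∑ k', lam k' := by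
      rw [Finset.sum_div]
      exact Finset.sum_congr rfl (fun k _ => by ring)
    rw [heq]
    have h2 : V - ε ≤ (∑ k, F k p * lam k) / ∑ k', lam k' :=
      (le_div_iff₀ hsum_pos).mpr (by nlinarith)
    linarith
  exact le_of_forall_pos_le_add key

lemma convex_Δ (k : ℕ) : Convex ℝ (Δ k) := by
  rintro u ⟨hu0, hu1⟩ v ⟨hv0, hv1⟩ a b ha hb hab
  refine ⟨fun i => ?_, ?_⟩
  · have h1 := hu0 i; have h2 := hv0 i
    simp only [Pi.add_apply, Pi.smul_apply, smul_eq_mul]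
    nlinarith
  simp only [Pi.add_apply, Pi.smul_apply, smul_eq_mul]
  rw [Finset.sum_add_distrib, ← Finset.mul_sum, ← Finset.mul_sum, hu1, hv1]
  linarith

lemma single_mem_Δ {k : ℕ} (i : Fin k) : (Pi.single i 1 : Fin k → ℝ) ∈ Δ k := by
  constructor
  · intro j
    rcases eq_or_ne j i with rfl | h
    · simp
    · simp [Pi.single_eq_of_ne h]
  · simp [Finset.sum_pi_single']

lemma supp_single {k : ℕ} (i : Fin k) : supp (Pi.single i 1 : Fin k → ℝ) ⊆ {i} := by
  intro j hj
  by_contra h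
  simp only [Set.mem_singleton_iff] at h
  simp [supp, Pi.single_eq_of_ne h] at hj

lemma exists_mem_suppmax {k : ℕ} (u : Fin (k+1) → ℝ) : ∃ i, i ∈ suppmax u := by
  obtain ⟨i, hi⟩ := Finite.exists_max u
  exact ⟨i, hi⟩

lemma dot_bounds {M : Matrix (Fin m) (Fin n) ℝ} (hM : ∀ i j, M i j ∈ Set.Icc (0:ℝ) 1)
    {p : Fin m → ℝ} {q : Fin n → ℝ} (hp : p ∈ Δ m) (hq : q ∈ Δ n) :
    p ⬝ᵥ M.mulVec q ∈ Set.Icc (0:ℝ) 1 := by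
  have hmv : ∀ i, M.mulVec q i = ∑ j, M i j * q j := fun i => rfl
  have hdp : p ⬝ᵥ M.mulVec q = ∑ i, p i * M.mulVec q i := rfl
  have hrow : ∀ i, (0:ℝ) ≤ M.mulVec q i ∧ M.mulVec q i ≤ 1 := by
    intro i
    rw [hmv]
    constructor
    · exact Finset.sum_nonneg fun j _ => mul_nonneg (hM i j).1 (hq.1 j)
    · calc ∑ j, M i j * q j ≤ ∑ j, q j :=
            Finset.sum_le_sum fun j _ => by nlinarith [(hM i j).1, (hM i j).2, hq.1 j]
        _ = 1 := hq.2
  rw [Set.mem_Icc, hdp]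
  constructor
  · exact Finset.sum_nonneg fun i _ => mul_nonneg (hp.1 i) (hrow i).1
  · calc ∑ i, p i * M.mulVec q i ≤ ∑ i, p i :=
        Finset.sum_le_sum fun i _ => by nlinarith [hp.1 i, (hrow i).1, (hrow i).2]
      _ = 1 := hp.2

lemma Tfun_bounds {R C : Matrix (Fin m) (Fin n) ℝ}
    (hR : ∀ i j, R i j ∈ Set.Icc (0:ℝ) 1) (hC : ∀ i j, C i j ∈ Set.Icc (0:ℝ) 1)
    {x x' w : Fin m → ℝ} {y y' z : Fin n → ℝ} {ρ : ℝ}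
    (hx : x ∈ Δ m) (hy : y ∈ Δ n) (hx' : x' ∈ Δ m) (hy' : y' ∈ Δ n)
    (hw : w ∈ Δ m) (hz : z ∈ Δ n) (hρ : ρ ∈ Set.Icc (0:ℝ) 1) :
    Tfun R C x y x' y' ρ w z ∈ Set.Icc (-2 : ℝ) 2 := by
  obtain ⟨h1a, h1b⟩ := dot_bounds hR hw hy'
  obtain ⟨h2a, h2b⟩ := dot_bounds hR hx hy'
  obtain ⟨h3a, h3b⟩ := dot_bounds hR hx' hy
  obtain ⟨h4a, h4b⟩ := dot_bounds hR hx hy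
  obtain ⟨h5a, h5b⟩ := dot_bounds hC hx' hz
  obtain ⟨h6a, h6b⟩ := dot_bounds hC hx hy'
  obtain ⟨h7a, h7b⟩ := dot_bounds hC hx' hy
  obtain ⟨h8a, h8b⟩ := dot_bounds hC hx hy
  obtain ⟨hρ0, hρ1⟩ := hρ
  unfold Tfun
  constructor <;> nlinarith

/-- the extreme-point functions -/
def KF (R C : Matrix (Fin m) (Fin n) ℝ) (x : Fin m → ℝ) (y : Fin n → ℝ) :
    (Fin m ⊕ Fin n) → ((Fin m → ℝ) × (Fin n → ℝ)) → ℝ :=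
  fun k p => Sum.elim
    (fun i => R.mulVec p.2 i - x ⬝ᵥ R.mulVec p.2 - p.1 ⬝ᵥ R.mulVec y + x ⬝ᵥ R.mulVec y)
    (fun j => Matrix.vecMul p.1 C j - x ⬝ᵥ C.mulVec p.2 - p.1 ⬝ᵥ C.mulVec y + x ⬝ᵥ C.mulVec y) k

lemma sum_mul_add {k : ℕ} (w u : Fin k → ℝ) (c : ℝ) (hw : ∑ i, w i = 1) :
    ∑ i, w i * (u i + c) = w ⬝ᵥ u + c := by
  simp only [mul_add, Finset.sum_add_distrib, ← Finset.sum_mul, hw, one_mul, dotProduct]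

lemma Tfun_decomp (R C : Matrix (Fin m) (Fin n) ℝ) (x x' w : Fin m → ℝ) (y y' z : Fin n → ℝ)
    (ρ : ℝ) (hw : ∑ i, w i = 1) (hz : ∑ j, z j = 1) :
    Tfun R C x y x' y' ρ w z
      = ρ * ∑ i, w i * KF R C x y (Sum.inl i) (x', y')
        + (1 - ρ) * ∑ j, z j * KF R C x y (Sum.inr j) (x', y') := by
  have h1 : ∑ i, w i * KF R C x y (Sum.inl i) (x', y')
      = w ⬝ᵥ R.mulVec y' + (- (x ⬝ᵥ R.mulVec y') - x' ⬝ᵥ R.mulVec y + x ⬝ᵥ R.mulVec y) := by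
    rw [← sum_mul_add w (R.mulVec y') _ hw]
    exact Finset.sum_congr rfl fun i _ => by simp only [KF, Sum.elim_inl]; ring
  have h2 : ∑ j, z j * KF R C x y (Sum.inr j) (x', y')
      = x' ⬝ᵥ C.mulVec z + (- (x ⬝ᵥ C.mulVec y') - x' ⬝ᵥ C.mulVec y + x ⬝ᵥ C.mulVec y) := by
    have hzv : z ⬝ᵥ Matrix.vecMul x' C = x' ⬝ᵥ C.mulVec z := by
      rw [dotProduct_comm, ← Matrix.dotProduct_mulVec]
    rw [← hzv, ← sum_mul_add z (Matrix.vecMul x' C) _ hz]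
    exact Finset.sum_congr rfl fun j _ => by simp only [KF, Sum.elim_inr]; ring
  rw [h1, h2]
  unfold Tfun
  ring

lemma KF_affine (R C : Matrix (Fin m) (Fin n) ℝ) (x : Fin m → ℝ) (y : Fin n → ℝ)
    (k : Fin m ⊕ Fin n) (p q : (Fin m → ℝ) × (Fin n → ℝ)) (a b : ℝ) (hab : a + b = 1) :
    KF R C x y k (a • p + b • q) = a * KF R C x y k p + b * KF R C x y k q := by
  cases k with
  | inl i =>
    simp only [KF, Sum.elim_inl, Prod.smul_snd, Prod.smul_fst, Prod.fst_add, Prod.snd_add,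
      Matrix.mulVec_add, Matrix.mulVec_smul, Pi.add_apply, Pi.smul_apply, smul_eq_mul,
      dotProduct_add, dotProduct_smul, add_dotProduct, smul_dotProduct]
    have h : b = 1 - a := by linarith
    subst h; ring
  | inr j =>
    simp only [KF, Sum.elim_inr, Prod.smul_snd, Prod.smul_fst, Prod.fst_add, Prod.snd_add,
      Matrix.mulVec_add, Matrix.mulVec_smul, Matrix.add_vecMul, Matrix.smul_vecMul,
      Pi.add_apply, Pi.smul_apply, smul_eq_mul,
      dotProduct_add, dotProduct_smul, add_dotProduct, smul_dotProduct]
    have h : b = 1 - a := by linarith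
    subst h; ring

lemma Tfun_le_of_extreme_le (R C : Matrix (Fin m) (Fin n) ℝ) (x x' w : Fin m → ℝ)
    (y y' z : Fin n → ℝ) (ρ : ℝ) (M : ℝ)
    (hρ : ρ ∈ Set.Icc (0:ℝ) 1) (hw : w ∈ Δ m) (hwsupp : supp w ⊆ SR R y)
    (hz : z ∈ Δ n) (hzsupp : supp z ⊆ SC C x)
    (h1 : ∀ i ∈ SR R y, KF R C x y (Sum.inl i) (x', y') ≤ M)
    (h2 : ∀ j ∈ SC C x, KF R C x y (Sum.inr j) (x', y') ≤ M) :
    Tfun R C x y x' y' ρ w z ≤ M := by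
  rw [Tfun_decomp R C x x' w y y' z ρ hw.2 hz.2]
  have hA : ∑ i, w i * KF R C x y (Sum.inl i) (x', y') ≤ M := by
    calc ∑ i, w i * KF R C x y (Sum.inl i) (x', y') ≤ ∑ i, w i * M := by
          refine Finset.sum_le_sum fun i _ => ?_
          rcases lt_or_eq_of_le (hw.1 i) with h | h
          · exact mul_le_mul_of_nonneg_left (h1 i (hwsupp h)) h.le
          · rw [← h]; simp
      _ = M := by rw [← Finset.sum_mul, hw.2, one_mul]
  have hB : ∑ j, z j * KF R C x y (Sum.inr j) (x', y') ≤ M := by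
    calc ∑ j, z j * KF R C x y (Sum.inr j) (x', y') ≤ ∑ j, z j * M := by
          refine Finset.sum_le_sum fun j _ => ?_
          rcases lt_or_eq_of_le (hz.1 j) with h | h
          · exact mul_le_mul_of_nonneg_left (h2 j (hzsupp h)) h.le
          · rw [← h]; simp
      _ = M := by rw [← Finset.sum_mul, hz.2, one_mul]
  obtain ⟨hρ0, hρ1⟩ := hρ
  nlinarith

end Auxiliary

/-- the minimax equality for `T`, and existence of a dual solution. -/
theorem stmt1 {m n : ℕ} (R C : Matrix (Fin (m+1)) (Fin (n+1)) ℝ)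
    (hR : ∀ i j, R i j ∈ Set.Icc (0:ℝ) 1) (hC : ∀ i j, C i j ∈ Set.Icc (0:ℝ) 1)
    (x : Fin (m+1) → ℝ) (y : Fin (n+1) → ℝ) (hx : x ∈ Δ (m+1)) (hy : y ∈ Δ (n+1)) :
    Vval R C x y =
      sSup {t : ℝ | ∃ ρ w z, dualFeasible R C x y ρ w z ∧ t = innerMin R C x y ρ w z} ∧
    ∃ ρ₀ w₀ z₀, dualFeasible R C x y ρ₀ w₀ z₀ ∧
      Vval R C x y = innerMin R C x y ρ₀ w₀ z₀ := by
  classical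
  obtain ⟨istar, histar⟩ : ∃ i, i ∈ SR R y := exists_mem_suppmax (R.mulVec y)
  obtain ⟨jstar, hjstar⟩ : ∃ j, j ∈ SC C x := exists_mem_suppmax (Matrix.vecMul x C)
  have hbase : dualFeasible R C x y 1 (Pi.single istar 1) (Pi.single jstar 1) :=
    ⟨⟨zero_le_one, le_rfl⟩, single_mem_Δ istar,
      (supp_single istar).trans (Set.singleton_subset_iff.mpr histar),
      single_mem_Δ jstar, (supp_single jstar).trans (Set.singleton_subset_iff.mpr hjstar)⟩
  -- basic facts on the dual-value sets
  have hDbdd : ∀ x' ∈ Δ (m+1), ∀ y' ∈ Δ (n+1), (2:ℝ) ∈ upperBounds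
      {t : ℝ | ∃ ρ w z, dualFeasible R C x y ρ w z ∧ t = Tfun R C x y x' y' ρ w z} := by
    rintro x' hx' y' hy' t ⟨ρ, w, z, ⟨hρ, hw, _, hz, _⟩, rfl⟩
    exact (Tfun_bounds hR hC hx hy hx' hy' hw hz hρ).2
  have hDne : ∀ (x' : Fin (m+1) → ℝ) (y' : Fin (n+1) → ℝ),
      Set.Nonempty {t : ℝ | ∃ ρ w z, dualFeasible R C x y ρ w z ∧ t = Tfun R C x y x' y' ρ w z} :=
    fun x' y' => ⟨_, 1, Pi.single istar 1, Pi.single jstar 1, hbase, rfl⟩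
  have hIMge : ∀ x' ∈ Δ (m+1), ∀ y' ∈ Δ (n+1), (-2:ℝ) ≤ innerMax R C x y x' y' := by
    intro x' hx' y' hy'
    have h1 : (-2:ℝ) ≤ Tfun R C x y x' y' 1 (Pi.single istar 1) (Pi.single jstar 1) :=
      (Tfun_bounds hR hC hx hy hx' hy' (single_mem_Δ istar) (single_mem_Δ jstar)
        ⟨zero_le_one, le_rfl⟩).1
    have h2 : Tfun R C x y x' y' 1 (Pi.single istar 1) (Pi.single jstar 1)
        ≤ innerMax R C x y x' y' :=
      le_csSup ⟨2, hDbdd x' hx' y' hy'⟩ ⟨1, Pi.single istar 1, Pi.single jstar 1, hbase, rfl⟩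
    linarith
  -- basic facts on the V set
  have hVne : Set.Nonempty {t : ℝ | ∃ x' ∈ Δ (m+1), ∃ y' ∈ Δ (n+1),
      t = innerMax R C x y x' y'} := ⟨_, x, hx, y, hy, rfl⟩
  have hVbdd : (-2:ℝ) ∈ lowerBounds {t : ℝ | ∃ x' ∈ Δ (m+1), ∃ y' ∈ Δ (n+1),
      t = innerMax R C x y x' y'} := by
    rintro t ⟨x', hx', y', hy', rfl⟩
    exact hIMge x' hx' y' hy'
  have hVle : ∀ x' ∈ Δ (m+1), ∀ y' ∈ Δ (n+1), Vval R C x y ≤ innerMax R C x y x' y' := by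
    intro x' hx' y' hy'
    exact csInf_le ⟨-2, hVbdd⟩ ⟨x', hx', y', hy', rfl⟩
  -- weak duality
  have hweak : ∀ ρ w z, dualFeasible R C x y ρ w z →
      innerMin R C x y ρ w z ≤ Vval R C x y := by
    intro ρ w z hd
    refine le_csInf hVne ?_
    rintro t ⟨x', hx', y', hy', rfl⟩
    have h1 : innerMin R C x y ρ w z ≤ Tfun R C x y x' y' ρ w z := by
      apply csInf_le
      · refine ⟨-2, ?_⟩
        rintro t ⟨x'', hx'', y'', hy'', rfl⟩
        obtain ⟨hρ, hw, _, hz, _⟩ := hd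
        exact (Tfun_bounds hR hC hx hy hx'' hy'' hw hz hρ).1
      · exact ⟨x', hx', y', hy', rfl⟩
    have h2 : Tfun R C x y x' y' ρ w z ≤ innerMax R C x y x' y' :=
      le_csSup ⟨2, hDbdd x' hx' y' hy'⟩ ⟨ρ, w, z, hd, rfl⟩
    exact h1.trans h2
  -- separation setup
  set feas : (Fin (m+1) ⊕ Fin (n+1)) → Prop :=
    fun k => Sum.elim (fun i => i ∈ SR R y) (fun j => j ∈ SC C x) k with hfeasdef
  haveI hιne : Nonempty {k // feas k} := ⟨⟨Sum.inl istar, histar⟩⟩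
  have hV : ∀ p ∈ (Δ (m+1)) ×ˢ (Δ (n+1)), ∃ k : {k // feas k},
      Vval R C x y ≤ KF R C x y k.1 p := by
    rintro ⟨x', y'⟩ ⟨hx', hy'⟩
    by_contra hcon
    push_neg at hcon
    have hne' : (Finset.univ : Finset {k // feas k}).Nonempty := Finset.univ_nonempty
    set Mx := Finset.univ.sup' hne' (fun k : {k // feas k} => KF R C x y k.1 (x', y'))
      with hMx
    have hMlt : Mx < Vval R C x y := by
      rw [hMx, Finset.sup'_lt_iff]
      exact fun k _ => hcon k
    have hub : innerMax R C x y x' y' ≤ Mx := by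
      refine csSup_le (hDne x' y') ?_
      rintro t ⟨ρ, w, z, ⟨hρ, hw, hwsupp, hz, hzsupp⟩, rfl⟩
      refine Tfun_le_of_extreme_le R C x x' w y y' z ρ Mx hρ hw hwsupp hz hzsupp ?_ ?_
      · intro i hi
        exact Finset.le_sup' (f := fun k : {k // feas k} => KF R C x y k.1 (x', y'))
          (Finset.mem_univ (⟨Sum.inl i, hi⟩ : {k // feas k}))
      · intro j hj
        exact Finset.le_sup' (f := fun k : {k // feas k} => KF R C x y k.1 (x', y'))
          (Finset.mem_univ (⟨Sum.inr j, hj⟩ : {k // feas k}))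
    have := hVle x' hx' y' hy'
    linarith
  obtain ⟨μ, hμ0, hμ1, hμV⟩ :=
    sep_lemma (P := (Δ (m+1)) ×ˢ (Δ (n+1))) ⟨(x, y), ⟨hx, hy⟩⟩
      ((convex_Δ (m+1)).prod (convex_Δ (n+1)))
      (fun k : {k // feas k} => fun p => KF R C x y k.1 p)
      (fun k p _ q _ a b _ _ hab => KF_affine R C x y k.1 p q a b hab)
      (Vval R C x y) hV
  -- build the dual solution
  set ν : (Fin (m+1) ⊕ Fin (n+1)) → ℝ :=
    fun k => if h : feas k then μ ⟨k, h⟩ else 0 with hνdef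
  have hν0 : ∀ k, 0 ≤ ν k := by
    intro k
    rw [hνdef]
    dsimp only
    split_ifs with h
    · exact hμ0 _
    · exact le_rfl
  have hνsupp : ∀ k, ν k ≠ 0 → feas k := by
    intro k h
    by_contra hf
    rw [hνdef] at h
    simp only [dif_neg hf] at h
    exact h rfl
  have hsubsum : ∀ g : (Fin (m+1) ⊕ Fin (n+1)) → ℝ, (∀ k, ¬ feas k → g k = 0) →
      ∑ k, g k = ∑ k : {k // feas k}, g k.1 := by
    intro g hg
    rw [← Finset.sum_filter_of_ne (p := feas) (fun k _ h => by
      by_contra hf; exact h (hg k hf))]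
    exact Finset.sum_subtype _ (by simp) g
  have hνis : ∀ k : {k // feas k}, ν k.1 = μ k := by
    intro k
    rw [hνdef]
    dsimp only
    rw [dif_pos k.2]
  have hνsum : ∑ k, ν k = 1 := by
    rw [hsubsum ν (fun k hf => by rw [hνdef]; dsimp only; rw [dif_neg hf]), ← hμ1]
    exact Finset.sum_congr rfl fun k _ => hνis k
  set ρ₀ : ℝ := ∑ i, ν (Sum.inl i) with hρ₀def
  set s₀ : ℝ := ∑ j, ν (Sum.inr j) with hs₀def
  have hsplit : ρ₀ + s₀ = 1 := by
    rw [hρ₀def, hs₀def, ← Fintype.sum_sum_type ν]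
    exact hνsum
  have hρ₀0 : 0 ≤ ρ₀ := Finset.sum_nonneg fun i _ => hν0 _
  have hs₀0 : 0 ≤ s₀ := Finset.sum_nonneg fun j _ => hν0 _
  have hρ₀1 : ρ₀ ≤ 1 := by linarith
  set w₀ : Fin (m+1) → ℝ :=
    if ρ₀ = 0 then Pi.single istar 1 else fun i => ν (Sum.inl i) / ρ₀ with hw₀def
  set z₀ : Fin (n+1) → ℝ :=
    if s₀ = 0 then Pi.single jstar 1 else fun j => ν (Sum.inr j) / s₀ with hz₀def
  have hw₀Δ : w₀ ∈ Δ (m+1) := by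
    rw [hw₀def]
    split_ifs with h
    · exact single_mem_Δ istar
    · refine ⟨fun i => div_nonneg (hν0 _) hρ₀0, ?_⟩
      rw [← Finset.sum_div, ← hρ₀def, div_self h]
  have hz₀Δ : z₀ ∈ Δ (n+1) := by
    rw [hz₀def]
    split_ifs with h
    · exact single_mem_Δ jstar
    · refine ⟨fun j => div_nonneg (hν0 _) hs₀0, ?_⟩
      rw [← Finset.sum_div, ← hs₀def, div_self h]
  have hw₀supp : supp w₀ ⊆ SR R y := by
    rw [hw₀def]
    split_ifs with h
    · exact (supp_single istar).trans (Set.singleton_subset_iff.mpr histar)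
    · intro i hi
      have hne : ν (Sum.inl i) ≠ 0 := by
        intro h0
        have : (0:ℝ) < ν (Sum.inl i) / ρ₀ := hi
        rw [h0] at this
        simp at this
      have hf := hνsupp _ hne
      rw [hfeasdef] at hf
      simpa using hf
  have hz₀supp : supp z₀ ⊆ SC C x := by
    rw [hz₀def]
    split_ifs with h
    · exact (supp_single jstar).trans (Set.singleton_subset_iff.mpr hjstar)
    · intro j hj
      have hne : ν (Sum.inr j) ≠ 0 := by
        intro h0
        have : (0:ℝ) < ν (Sum.inr j) / s₀ := hj
        rw [h0] at this
        simp at this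
      have hf := hνsupp _ hne
      rw [hfeasdef] at hf
      simpa using hf
  have hdual : dualFeasible R C x y ρ₀ w₀ z₀ :=
    ⟨⟨hρ₀0, hρ₀1⟩, hw₀Δ, hw₀supp, hz₀Δ, hz₀supp⟩
  -- the key inequality
  have hkey : ∀ x' ∈ Δ (m+1), ∀ y' ∈ Δ (n+1),
      Vval R C x y ≤ Tfun R C x y x' y' ρ₀ w₀ z₀ := by
    intro x' hx' y' hy'
    rw [Tfun_decomp R C x x' w₀ y y' z₀ ρ₀ hw₀Δ.2 hz₀Δ.2]
    have hA : ρ₀ * ∑ i, w₀ i * KF R C x y (Sum.inl i) (x', y')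
        = ∑ i, ν (Sum.inl i) * KF R C x y (Sum.inl i) (x', y') := by
      by_cases h : ρ₀ = 0
      · have hz : ∀ i, ν (Sum.inl i) = 0 := by
          intro i
          have hsum0 : ∑ i, ν (Sum.inl i) = 0 := by rw [← hρ₀def]; exact h
          exact (Finset.sum_eq_zero_iff_of_nonneg
            (fun i _ => hν0 (Sum.inl i))).mp hsum0 i (Finset.mem_univ i)
        simp [h, hz]
      · rw [hw₀def, if_neg h, Finset.mul_sum]
        refine Finset.sum_congr rfl fun i _ => ?_
        field_simp
      -- no more
    have hs₀eq : 1 - ρ₀ = s₀ := by linarith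
    have hB : (1 - ρ₀) * ∑ j, z₀ j * KF R C x y (Sum.inr j) (x', y')
        = ∑ j, ν (Sum.inr j) * KF R C x y (Sum.inr j) (x', y') := by
      rw [hs₀eq]
      by_cases h : s₀ = 0
      · have hz : ∀ j, ν (Sum.inr j) = 0 := by
          intro j
          have hsum0 : ∑ j, ν (Sum.inr j) = 0 := by rw [← hs₀def]; exact h
          exact (Finset.sum_eq_zero_iff_of_nonneg
            (fun j _ => hν0 (Sum.inr j))).mp hsum0 j (Finset.mem_univ j)
        simp [h, hz]
      · rw [hz₀def, if_neg h, Finset.mul_sum]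
        refine Finset.sum_congr rfl fun j _ => ?_
        field_simp
    rw [hA, hB]
    have hback : ∑ i, ν (Sum.inl i) * KF R C x y (Sum.inl i) (x', y')
        + ∑ j, ν (Sum.inr j) * KF R C x y (Sum.inr j) (x', y')
        = ∑ k : {k // feas k}, μ k * KF R C x y k.1 (x', y') := by
      rw [← Fintype.sum_sum_type (fun k => ν k * KF R C x y k (x', y'))]
      rw [hsubsum (fun k => ν k * KF R C x y k (x', y'))
        (fun k hf => by rw [hνdef]; dsimp only; rw [dif_neg hf, zero_mul])]
      exact Finset.sum_congr rfl fun k _ => by rw [hνis k]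
    rw [hback]
    exact hμV (x', y') ⟨hx', hy'⟩
  -- conclude
  have hVd : Vval R C x y = innerMin R C x y ρ₀ w₀ z₀ := by
    refine le_antisymm ?_ (hweak ρ₀ w₀ z₀ hdual)
    refine le_csInf ⟨Tfun R C x y x y ρ₀ w₀ z₀, x, hx, y, hy, rfl⟩ ?_
    rintro t ⟨x', hx', y', hy', rfl⟩
    exact hkey x' hx' y' hy'
  have hmemW : Vval R C x y ∈ {t : ℝ | ∃ ρ w z, dualFeasible R C x y ρ w z ∧
      t = innerMin R C x y ρ w z} := ⟨ρ₀, w₀, z₀, hdual, hVd⟩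
  have hubW : ∀ t ∈ {t : ℝ | ∃ ρ w z, dualFeasible R C x y ρ w z ∧
      t = innerMin R C x y ρ w z}, t ≤ Vval R C x y := by
    rintro t ⟨ρ, w, z, hd, rfl⟩
    exact hweak ρ w z hd
  refine ⟨le_antisymm (le_csSup ⟨Vval R C x y, hubW⟩ hmemW) (csSup_le ⟨_, hmemW⟩ hubW),
    ρ₀, w₀, z₀, hdual, hVd⟩


end TS
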